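/- For a list L = ⟨ℓ₁,…,ℓₙ⟩ of positive integers, define trunc(i,x) = ⌊2ⁱ·x⌋/2ⁱ, t(i,x) = trunc(i,x) + ⌈x − trunc(i,x)⌉/2ⁱ, φ(L,1) = 2^(−ℓ₁), and φ(L,i) = t(ℓᵢ, φ(L,i−1)) + 2^(−ℓᵢ) for 2 ≤ i ≤ n. Then there exists a binary alphabetic code with codeword lengths ℓ₁,…,ℓₙ if and only if φ(L,n) ≤ 1. -/

import Mathlib

/-- No codeword is a prefix of another. -/
def PrefixFree {n : ℕ} (w : Fin n → List Bool) : Prop :=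
  ∀ i j : Fin n, i ≠ j → ¬ (w i <+: w j)

/-- The codewords are strictly increasing in the lexicographic order on binary strings. -/
def LexIncreasing {n : ℕ} (w : Fin n → List Bool) : Prop :=
  ∀ i j : Fin n, i < j → List.Lex (· < ·) (w i) (w j)

/-- A binary alphabetic code: prefix-free and lexicographically increasing codewords. -/
def IsAlphabeticCode {n : ℕ} (w : Fin n → List Bool) : Prop :=
  PrefixFree w ∧ LexIncreasing w


/-- Truncation of the binary expansion of x at the i-th bit. -/
noncomputable def trunc (i : ℕ) (x : ℝ) : ℝ := ⌊(2 : ℝ) ^ i * x⌋ / (2 : ℝ) ^ i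

/-- Sheinwald's rounding-up function t(i,x) = trunc(i,x) + ⌈x − trunc(i,x)⌉/2ⁱ. -/
noncomputable def tfun (i : ℕ) (x : ℝ) : ℝ :=
  trunc i x + (⌈x - trunc i x⌉ : ℝ) / (2 : ℝ) ^ i

/-- Sheinwald's quantity φ(L,i), where ℓ i is the i-th length (1-indexed). -/
noncomputable def phi (ℓ : ℕ → ℕ) : ℕ → ℝ
  | 0 => 0
  | 1 => (2 : ℝ) ^ (-(ℓ 1 : ℤ))
  | i + 2 => tfun (ℓ (i + 2)) (phi ℓ (i + 1)) + (2 : ℝ) ^ (-(ℓ (i + 2) : ℤ))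

namespace Shw

/-! ### Combinatorial layer: binary words as numbers -/

def num : List Bool → ℕ
  | [] => 0
  | b :: t => (if b then 2 ^ t.length else 0) + num t

lemma num_lt (w : List Bool) : num w < 2 ^ w.length := by
  induction w with
  | nil => simp [num]
  | cons b t ih =>
    have h2 : (2:ℕ) ^ (b :: t).length = 2 ^ t.length + 2 ^ t.length := by
      simp [List.length_cons, pow_succ]; ring
    rw [h2]; cases b <;> simp [num] <;> omega

lemma sep_of_code : ∀ u v : List Bool, ¬ u <+: v → List.Lex (· < ·) u v →
    (num u + 1) * 2 ^ v.length ≤ num v * 2 ^ u.length := by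
  intro u
  induction u with
  | nil => intro v hp _; exact absurd (List.nil_prefix) hp
  | cons a u' ih =>
    intro v hp hlex
    cases v with
    | nil => cases hlex
    | cons b v' =>
      cases hlex with
      | rel h =>
        have ha : a = false ∧ b = true := by
          revert h; cases a <;> cases b <;> simp [Bool.lt_iff]
        obtain ⟨rfl, rfl⟩ := ha
        have h1 := num_lt u'
        simp only [num, List.length_cons, pow_succ]
        norm_num
        calc (num u' + 1) * (2 ^ v'.length * 2)
            ≤ 2 ^ u'.length * (2 ^ v'.length * 2) := Nat.mul_le_mul_right _ (by omega)
          _ = 2 ^ v'.length * (2 ^ u'.length * 2) := by ring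
          _ ≤ (2 ^ v'.length + num v') * (2 ^ u'.length * 2) :=
              Nat.mul_le_mul_right _ (Nat.le_add_right _ _)
      | cons h =>
        have hp' : ¬ u' <+: v' := fun hh => hp (List.cons_prefix_cons.mpr ⟨rfl, hh⟩)
        have IH := ih v' hp' h
        have IH2 : (num u' + 1) * 2 ^ v'.length * 2 ≤ num v' * 2 ^ u'.length * 2 :=
          Nat.mul_le_mul_right _ IH
        simp only [num, List.length_cons, pow_succ]
        cases a <;> simp <;> nlinarith [IH2]

lemma code_of_sep : ∀ u v : List Bool,
    (num u + 1) * 2 ^ v.length ≤ num v * 2 ^ u.length →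
    ¬ u <+: v ∧ ¬ v <+: u ∧ List.Lex (· < ·) u v := by
  intro u
  induction u with
  | nil =>
    intro v h
    exfalso; have := num_lt v; simp [num] at h; omega
  | cons a u' ih =>
    intro v h
    cases v with
    | nil => exfalso; simp [num] at h
    | cons b v' =>
      have h1 := num_lt u'
      have h2 := num_lt v'
      cases a <;> cases b
      · have h' : (num u' + 1) * 2 ^ v'.length ≤ num v' * 2 ^ u'.length := by
          simp only [num, List.length_cons, pow_succ] at h
          norm_num at h
          nlinarith [h]
        obtain ⟨p1, p2, p3⟩ := ih v' h'
        refine ⟨?_, ?_, List.Lex.cons p3⟩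
        · intro hh; exact p1 (List.cons_prefix_cons.mp hh).2
        · intro hh; exact p2 (List.cons_prefix_cons.mp hh).2
      · refine ⟨?_, ?_, List.Lex.rel (by simp [Bool.lt_iff])⟩
        · intro hh; simpa using (List.cons_prefix_cons.mp hh).1
        · intro hh; simpa using (List.cons_prefix_cons.mp hh).1
      · exfalso
        simp only [num, List.length_cons, pow_succ] at h
        norm_num at h
        nlinarith [h]
      · have h' : (num u' + 1) * 2 ^ v'.length ≤ num v' * 2 ^ u'.length := by
          simp only [num, List.length_cons, pow_succ] at h
          norm_num at h
          nlinarith [h]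
        obtain ⟨p1, p2, p3⟩ := ih v' h'
        refine ⟨?_, ?_, List.Lex.cons p3⟩
        · intro hh; exact p1 (List.cons_prefix_cons.mp hh).2
        · intro hh; exact p2 (List.cons_prefix_cons.mp hh).2

def toWord : ℕ → ℕ → List Bool
  | 0, _ => []
  | l+1, a => toWord l (a / 2) ++ [decide (a % 2 = 1)]

lemma toWord_length (l a : ℕ) : (toWord l a).length = l := by
  induction l generalizing a with
  | zero => rfl
  | succ l ih => simp [toWord, ih]

lemma num_append_singleton (w : List Bool) (b : Bool) :
    num (w ++ [b]) = 2 * num w + (if b then 1 else 0) := by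
  induction w with
  | nil => cases b <;> simp [num]
  | cons c t ih =>
    rw [List.cons_append]
    cases c <;> simp only [num, ih, List.length_append, List.length_cons, List.length_nil,
      pow_succ] <;> cases b <;> simp <;> ring

lemma num_toWord (l a : ℕ) (h : a < 2 ^ l) : num (toWord l a) = a := by
  induction l generalizing a with
  | zero => interval_cases a; rfl
  | succ l ih =>
    have hd : a / 2 < 2 ^ l := by
      have : (2:ℕ) ^ (l+1) = 2 ^ l * 2 := pow_succ 2 l
      omega
    simp only [toWord, num_append_singleton, ih _ hd]
    rcases Nat.mod_two_eq_zero_or_one a with h2 | h2 <;> simp [h2] <;> omega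

/-! ### Analytic layer -/

lemma two_zpow_neg (l : ℕ) : (2:ℝ) ^ (-(l:ℤ)) = 1 / 2 ^ l := by
  rw [zpow_neg, zpow_natCast, one_div]

lemma pow_pos' (l : ℕ) : (0:ℝ) < 2 ^ l := by positivity

lemma tfun_eq (l : ℕ) (x : ℝ) : tfun l x = (⌈(2:ℝ) ^ l * x⌉ : ℝ) / 2 ^ l := by
  set y : ℝ := (2:ℝ) ^ l * x with hy
  have hpos := pow_pos' l
  have hx : x = y / 2 ^ l := by field_simp [hy]; rw [hy]; ring
  have htr : trunc l x = (⌊y⌋ : ℝ) / 2 ^ l := rfl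
  have hdiff : x - trunc l x = Int.fract y / 2 ^ l := by
    rw [htr, hx, Int.fract, sub_div]
  by_cases h0 : Int.fract y = 0
  · have hyint : y = (⌊y⌋ : ℝ) := by have := Int.fract_add_floor y; rw [h0] at this; linarith
    have hceil : ⌈y⌉ = ⌊y⌋ := by rw [hyint]; simp
    rw [tfun, hdiff, h0, htr, hceil]
    norm_num
  · have hfr0 : 0 < Int.fract y := lt_of_le_of_ne (Int.fract_nonneg y) (Ne.symm h0)
    have hfr1 : Int.fract y < 1 := Int.fract_lt_one y
    have h2l : (1:ℝ) ≤ 2 ^ l := one_le_pow₀ (by norm_num)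
    have hc1 : ⌈x - trunc l x⌉ = 1 := by
      rw [hdiff]
      have hle : Int.fract y / 2 ^ l ≤ 1 := by
        calc Int.fract y / 2 ^ l ≤ Int.fract y / 1 :=
              div_le_div_of_nonneg_left (le_of_lt hfr0) one_pos h2l
          _ ≤ 1 := by rw [div_one]; linarith
      have hgt : (0:ℝ) < Int.fract y / 2 ^ l := by positivity
      have : ⌈Int.fract y / 2 ^ l⌉ = (1:ℤ) := by
        rw [Int.ceil_eq_iff]
        constructor
        · push_cast; linarith
        · push_cast; linarith
      exact this
    have hc2 : ⌈y⌉ = ⌊y⌋ + 1 := by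
      have h1 : (⌊y⌋:ℝ) < y := by simp only [Int.fract] at hfr0; linarith
      have h2 : y ≤ (⌊y⌋:ℝ) + 1 := le_of_lt (Int.lt_floor_add_one y)
      have := Int.ceil_le.mpr (by push_cast; linarith : y ≤ ((⌊y⌋ + 1 : ℤ):ℝ))
      have := Int.lt_ceil.mpr h1
      omega
    rw [tfun, hc1, htr, hc2]
    push_cast
    ring

lemma le_tfun (l : ℕ) (x : ℝ) : x ≤ tfun l x := by
  rw [tfun_eq]
  rw [le_div_iff₀ (pow_pos' l)]
  calc x * 2 ^ l = 2 ^ l * x := by ring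
    _ ≤ _ := Int.le_ceil _

lemma tfun_le (l : ℕ) (x : ℝ) (m : ℤ) (h : x ≤ (m:ℝ) / 2 ^ l) : tfun l x ≤ (m:ℝ) / 2 ^ l := by
  rw [tfun_eq]
  have hc : ⌈(2:ℝ) ^ l * x⌉ ≤ m := by
    apply Int.ceil_le.mpr
    rw [← le_div_iff₀' (pow_pos' l)]
    exact h
  gcongr

lemma phi_succ (ℓ : ℕ → ℕ) (i : ℕ) (h : 1 ≤ i) :
    phi ℓ (i+1) = tfun (ℓ (i+1)) (phi ℓ i) + (2:ℝ) ^ (-(ℓ (i+1) : ℤ)) := by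
  obtain ⟨j, rfl⟩ := Nat.exists_eq_add_of_le h
  rw [Nat.add_comm 1 j]
  rfl

lemma phi_pos (ℓ : ℕ → ℕ) (i : ℕ) (h : 1 ≤ i) : 0 < phi ℓ i := by
  induction i with
  | zero => omega
  | succ j ih =>
    rcases Nat.eq_or_lt_of_le h with h1 | h1
    · have hj : j = 0 := by omega
      subst hj
      rw [show phi ℓ (0+1) = (2:ℝ) ^ (-(ℓ 1 : ℤ)) from rfl, two_zpow_neg]
      positivity
    · have hj : 1 ≤ j := by omega
      rw [phi_succ ℓ j hj, two_zpow_neg]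
      have := le_tfun (ℓ (j+1)) (phi ℓ j)
      have := ih hj
      have : (0:ℝ) < 1 / 2 ^ (ℓ (j+1)) := by positivity
      linarith

lemma phi_mono (ℓ : ℕ → ℕ) (i j : ℕ) (h1 : 1 ≤ i) (h2 : i ≤ j) : phi ℓ i ≤ phi ℓ j := by
  induction j with
  | zero => omega
  | succ k ih =>
    rcases Nat.eq_or_lt_of_le h2 with h3 | h3
    · rw [h3]
    · have hk : i ≤ k := by omega
      have hk1 : 1 ≤ k := le_trans h1 hk
      refine (ih hk).trans ?_
      rw [phi_succ ℓ k hk1, two_zpow_neg]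
      have := le_tfun (ℓ (k+1)) (phi ℓ k)
      have : (0:ℝ) < 1 / 2 ^ (ℓ (k+1)) := by positivity
      linarith

/-- The canonical codeword values. -/
noncomputable def Aseq (ℓ : ℕ → ℕ) : ℕ → ℕ
  | 0 => 0
  | 1 => 0
  | j + 2 => (⌈(2:ℝ) ^ (ℓ (j+2)) * phi ℓ (j+1)⌉).toNat

lemma Aseq_cast (ℓ : ℕ → ℕ) (j : ℕ) :
    ((Aseq ℓ (j+2) : ℕ) : ℝ) = (⌈(2:ℝ) ^ (ℓ (j+2)) * phi ℓ (j+1)⌉ : ℝ) := by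
  have hpos : (0:ℝ) < (2:ℝ) ^ (ℓ (j+2)) * phi ℓ (j+1) :=
    mul_pos (pow_pos' _) (phi_pos ℓ (j+1) (by omega))
  have hc : (0:ℤ) ≤ ⌈(2:ℝ) ^ (ℓ (j+2)) * phi ℓ (j+1)⌉ := le_of_lt (Int.ceil_pos.mpr hpos)
  rw [show Aseq ℓ (j+2) = (⌈(2:ℝ) ^ (ℓ (j+2)) * phi ℓ (j+1)⌉).toNat from rfl]
  exact_mod_cast congrArg (fun z : ℤ => (z:ℝ)) (Int.toNat_of_nonneg hc)

lemma phi_eq_A (ℓ : ℕ → ℕ) (i : ℕ) (h : 1 ≤ i) :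
    phi ℓ i = ((Aseq ℓ i : ℕ) + 1 : ℝ) / 2 ^ (ℓ i) := by
  match i, h with
  | 1, _ =>
    rw [show phi ℓ 1 = (2:ℝ) ^ (-(ℓ 1 : ℤ)) from rfl, two_zpow_neg,
      show Aseq ℓ 1 = 0 from rfl]
    norm_num
  | (j+2), _ =>
    rw [phi_succ ℓ (j+1) (by omega), tfun_eq, two_zpow_neg, Aseq_cast]
    ring

lemma A_sep (ℓ : ℕ → ℕ) (i : ℕ) (h : 1 ≤ i) :
    ((Aseq ℓ i : ℕ) + 1 : ℝ) / 2 ^ (ℓ i) ≤ ((Aseq ℓ (i+1) : ℕ) : ℝ) / 2 ^ (ℓ (i+1)) := by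
  obtain ⟨j, rfl⟩ := Nat.exists_eq_add_of_le h
  rw [Nat.add_comm 1 j]
  rw [← phi_eq_A ℓ (j+1) (by omega), Aseq_cast, ← tfun_eq]
  exact le_tfun _ _

lemma A_chain (ℓ : ℕ → ℕ) (i j : ℕ) (h1 : 1 ≤ i) (h2 : i < j) :
    ((Aseq ℓ i : ℕ) + 1 : ℝ) / 2 ^ (ℓ i) ≤ ((Aseq ℓ j : ℕ) : ℝ) / 2 ^ (ℓ j) := by
  induction j with
  | zero => omega
  | succ k ih =>
    rcases Nat.lt_or_ge i k with h3 | h3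
    · refine (ih h3).trans ?_
      have step := A_sep ℓ k (by omega)
      have : ((Aseq ℓ k : ℕ) : ℝ) / 2 ^ (ℓ k) ≤ ((Aseq ℓ k : ℕ) + 1 : ℝ) / 2 ^ (ℓ k) :=
        (div_le_div_iff_of_pos_right (pow_pos' _)).mpr (by linarith)
      linarith
    · have : i = k := by omega
      subst this
      exact A_sep ℓ i h1

lemma nat_of_real_div_le (a b p q : ℕ)
    (h : ((a:ℝ) + 1) / 2 ^ p ≤ (b:ℝ) / 2 ^ q) : (a + 1) * 2 ^ q ≤ b * 2 ^ p := by
  rw [div_le_div_iff₀ (pow_pos' p) (pow_pos' q)] at h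
  exact_mod_cast h

lemma real_of_nat_div_le (a b p q : ℕ)
    (h : a * 2 ^ q ≤ b * 2 ^ p) : ((a:ℝ)) / 2 ^ p ≤ (b:ℝ) / 2 ^ q := by
  rw [div_le_div_iff₀ (pow_pos' p) (pow_pos' q)]
  exact_mod_cast h

end Shw

open Shw in
/-- Sheinwald's condition: an alphabetic code with lengths ℓ₁,…,ℓₙ exists iff φ(L,n) ≤ 1. -/
theorem sheinwald_condition (n : ℕ) (hn : 1 ≤ n) (ℓ : ℕ → ℕ)
    (hpos : ∀ i, 1 ≤ i → i ≤ n → 0 < ℓ i) :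
    (∃ w : Fin n → List Bool, IsAlphabeticCode w ∧
        ∀ i : Fin n, (w i).length = ℓ (i.1 + 1)) ↔ phi ℓ n ≤ 1 := by
  constructor
  · rintro ⟨w, ⟨hpf, hlex⟩, hlen⟩
    have claim : ∀ k : ℕ, ∀ hk : k < n,
        phi ℓ (k+1) ≤ ((num (w ⟨k, hk⟩) : ℝ) + 1) / 2 ^ (ℓ (k+1)) := by
      intro k
      induction k with
      | zero =>
        intro hk
        rw [show phi ℓ (0+1) = (2:ℝ) ^ (-(ℓ 1 : ℤ)) from rfl, two_zpow_neg]
        have h0 : (0:ℝ) ≤ (num (w ⟨0, hk⟩) : ℝ) := Nat.cast_nonneg _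
        exact (div_le_div_iff_of_pos_right (pow_pos' _)).mpr (by linarith)
      | succ k ih =>
        intro hk
        have hk' : k < n := by omega
        set i1 : Fin n := ⟨k, hk'⟩
        set i2 : Fin n := ⟨k+1, hk⟩
        have hne : i1 ≠ i2 := by simp [i1, i2, Fin.ext_iff]
        have hlt : i1 < i2 := by simp [i1, i2, Fin.lt_def]
        have hsep := sep_of_code (w i1) (w i2) (hpf i1 i2 hne) (hlex i1 i2 hlt)
        rw [hlen i1, hlen i2] at hsep
        have hsepR : ((num (w i1) : ℝ) + 1) / 2 ^ (ℓ (k+1)) ≤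
            ((num (w i2) : ℝ)) / 2 ^ (ℓ (k+2)) := by
          have := real_of_nat_div_le (num (w i1) + 1) (num (w i2)) (ℓ (k+1)) (ℓ (k+2)) hsep
          push_cast at this ⊢
          convert this using 2
        have htf : tfun (ℓ (k+2)) (phi ℓ (k+1)) ≤ ((num (w i2) : ℝ)) / 2 ^ (ℓ (k+2)) := by
          have := tfun_le (ℓ (k+2)) (phi ℓ (k+1)) ((num (w i2) : ℤ))
            (by push_cast; exact (ih hk').trans hsepR)
          push_cast at this
          exact this
        rw [phi_succ ℓ (k+1) (by omega), two_zpow_neg]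
        have h2 : (0:ℝ) < 2 ^ (ℓ (k+2)) := pow_pos' _
        rw [show ((num (w i2) : ℝ) + 1) / 2 ^ (ℓ (k+2)) =
            (num (w i2) : ℝ) / 2 ^ (ℓ (k+2)) + 1 / 2 ^ (ℓ (k+2)) by ring]
        linarith
    obtain ⟨m, hm⟩ : ∃ m, n = m + 1 := ⟨n - 1, by omega⟩
    have hk : m < n := by omega
    have hcl := claim m hk
    rw [hm]
    refine hcl.trans ?_
    rw [div_le_one (pow_pos' _)]
    have := num_lt (w ⟨m, hk⟩)
    rw [hlen ⟨m, hk⟩] at this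
    have : num (w ⟨m, hk⟩) + 1 ≤ 2 ^ (ℓ (m+1)) := this
    calc ((num (w ⟨m, hk⟩) : ℝ) + 1) = ((num (w ⟨m, hk⟩) + 1 : ℕ) : ℝ) := by push_cast; ring
      _ ≤ ((2 ^ (ℓ (m+1)) : ℕ) : ℝ) := by exact_mod_cast this
      _ = 2 ^ (ℓ (m+1)) := by push_cast; ring
  · intro hphi
    have hA_lt : ∀ i, 1 ≤ i → i ≤ n → Aseq ℓ i < 2 ^ (ℓ i) := by
      intro i h1 h2
      have h3 : phi ℓ i ≤ 1 := (phi_mono ℓ i n h1 h2).trans hphi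
      rw [phi_eq_A ℓ i h1, div_le_one (pow_pos' _)] at h3
      have : ((Aseq ℓ i + 1 : ℕ) : ℝ) ≤ ((2 ^ (ℓ i) : ℕ) : ℝ) := by push_cast; linarith
      exact_mod_cast this
    refine ⟨fun i => toWord (ℓ (i.1+1)) (Aseq ℓ (i.1+1)), ⟨?_, ?_⟩, ?_⟩
    · -- PrefixFree
      intro i j hij
      have hnum : ∀ k : Fin n, num (toWord (ℓ (k.1+1)) (Aseq ℓ (k.1+1))) = Aseq ℓ (k.1+1) :=
        fun k => num_toWord _ _ (hA_lt (k.1+1) (by omega) (by omega))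
      rcases lt_or_gt_of_ne hij with h | h
      · have hij' : i.1 < j.1 := h
        have hchain := A_chain ℓ (i.1+1) (j.1+1) (by omega) (by omega)
        have hsep := nat_of_real_div_le _ _ _ _ hchain
        have := code_of_sep (toWord (ℓ (i.1+1)) (Aseq ℓ (i.1+1)))
          (toWord (ℓ (j.1+1)) (Aseq ℓ (j.1+1))) (by
          rw [toWord_length, toWord_length, hnum i, hnum j]
          exact hsep)
        exact this.1
      · have hij' : j.1 < i.1 := h
        have hchain := A_chain ℓ (j.1+1) (i.1+1) (by omega) (by omega)
        have hsep := nat_of_real_div_le _ _ _ _ hchain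
        have := code_of_sep (toWord (ℓ (j.1+1)) (Aseq ℓ (j.1+1)))
          (toWord (ℓ (i.1+1)) (Aseq ℓ (i.1+1))) (by
          rw [toWord_length, toWord_length, hnum j, hnum i]
          exact hsep)
        exact this.2.1
    · -- LexIncreasing
      intro i j hij
      have hnum : ∀ k : Fin n, num (toWord (ℓ (k.1+1)) (Aseq ℓ (k.1+1))) = Aseq ℓ (k.1+1) :=
        fun k => num_toWord _ _ (hA_lt (k.1+1) (by omega) (by omega))
      have hij' : i.1 < j.1 := hij
      have hchain := A_chain ℓ (i.1+1) (j.1+1) (by omega) (by omega)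
      have hsep := nat_of_real_div_le _ _ _ _ hchain
      have := code_of_sep (toWord (ℓ (i.1+1)) (Aseq ℓ (i.1+1)))
        (toWord (ℓ (j.1+1)) (Aseq ℓ (j.1+1))) (by
        rw [toWord_length, toWord_length, hnum i, hnum j]
        exact hsep)
      exact this.2.2
    · intro i
      exact toWord_length _ _
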